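/- arXiv:2201.08908 — 3 statements merged into one kernel-verified Lean document; each statement's English description precedes it below -/
import Mathlib

section
/- For all integers a, b, c, the matrix M = [[1, 3a, 3b], [0, -2-3c, -1-3c-3c²], [0, 3, 1+3c]] has determinant 1 and satisfies M³ = I. -/
theorem stmt_11 (a b c : ℤ) :
    let M : Matrix (Fin 3) (Fin 3) ℤ :=
      !![1, 3 * a, 3 * b; 0, -2 - 3 * c, -1 - 3 * c - 3 * c ^ 2; 0, 3, 1 + 3 * c]
    M.det = 1 ∧ M ^ 3 = 1 := by
  intro M
  constructor
  · simp [M, Matrix.det_fin_three, Matrix.vecHead, Matrix.vecTail]; ring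
  · rw [pow_succ, pow_succ, pow_one]
    ext i j
    fin_cases i <;> fin_cases j <;>
      simp [M, Matrix.mul_apply, Fin.sum_univ_succ, Matrix.one_apply] <;> ring
end

section
/- Let A ∈ SL₃(ℤ) with A³ = I and A ≠ I. Then for every prime p, the reduction of A modulo p is not the identity matrix in SL₃(ℤ/pℤ). -/
/-!
Write `A = 1 + M`. Then `A ^ 3 = 1` says `3 M = -(3 M ^ 2 + M ^ 3)`, and `A ≡ 1 (mod p)` says that
`p` divides every entry of `M`. If `p ^ k` (`k ≥ 1`) divides `M`, the right-hand side is divisible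
by `p ^ (2k)`, which gives `p ^ (k + 1) ∣ M` when `p ≠ 3`; when `p = 3` it is even divisible by
`3 ^ (k + 2)`, which again gives `3 ^ (k + 1) ∣ M`. So all powers of `p` divide `M`, and `M = 0`.
-/

namespace Matrix

theorem dvd_mul_apply_of_dvd {l m n R : Type*} [Fintype m] [CommSemiring R] {a b : R}
    {M : Matrix l m R} {N : Matrix m n R} (hM : ∀ i j, a ∣ M i j) (hN : ∀ i j, b ∣ N i j)
    (i : l) (j : n) : a * b ∣ (M * N) i j :=
  Finset.dvd_sum fun k _ ↦ mul_dvd_mul (hM i k) (hN k j)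

theorem pow_dvd_pow_apply_of_dvd {n R : Type*} [Fintype n] [DecidableEq n] [CommSemiring R]
    {a : R} {M : Matrix n n R} (hM : ∀ i j, a ∣ M i j) (m : ℕ) (i j : n) :
    a ^ m ∣ (M ^ m) i j := by
  induction m generalizing i j with
  | zero => simp
  | succ m ih => rw [pow_succ, pow_succ]; exact dvd_mul_apply_of_dvd ih hM i j

end Matrix

theorem Int.pow_succ_dvd_of_three_mul_eq {p : ℕ} (hp : p.Prime) {k : ℕ} (hk : 1 ≤ k)
    {x y z : ℤ} (hy : ((p : ℤ) ^ k) ^ 2 ∣ y) (hz : ((p : ℤ) ^ k) ^ 3 ∣ z)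
    (h : 3 * x = -(3 * y + z)) : (p : ℤ) ^ (k + 1) ∣ x := by
  rw [← pow_mul, mul_comm] at hy hz
  by_cases h3 : p = 3
  · subst h3
    have hdvd : (3 : ℤ) * 3 ^ (k + 1) ∣ 3 * x := by
      rw [h, ← pow_succ']
      refine (dvd_add ?_ ?_).neg_right
      · rw [pow_succ']
        exact mul_dvd_mul_left 3 ((pow_dvd_pow 3 (by omega : k + 1 ≤ 2 * k)).trans hy)
      · exact (pow_dvd_pow 3 (by omega : k + 1 + 1 ≤ 3 * k)).trans hz
    exact (mul_dvd_mul_iff_left three_ne_zero).mp hdvd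
  · have hcop : IsCoprime ((p : ℤ) ^ (k + 1)) 3 := by
      refine IsCoprime.pow_left ?_
      rw [Int.isCoprime_iff_gcd_eq_one]
      exact_mod_cast (Nat.coprime_primes hp Nat.prime_three).mpr h3
    refine hcop.dvd_of_dvd_mul_left ?_
    rw [h]
    exact (dvd_add (((pow_dvd_pow _ (by omega)).trans hy).mul_left 3)
      ((pow_dvd_pow _ (by omega)).trans hz)).neg_right

theorem Int.eq_zero_of_forall_pow_dvd {p : ℕ} (hp : 2 ≤ p) {x : ℤ}
    (h : ∀ k, (p : ℤ) ^ k ∣ x) : x = 0 := by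
  by_contra hx
  obtain ⟨k, hk⟩ :=
    (Int.finiteMultiplicity_iff (a := p)).mpr ⟨by rw [Int.natAbs_natCast]; omega, hx⟩
  exact hk (h (k + 1))

theorem Matrix.eq_zero_of_forall_dvd_of_one_add_pow_three_eq_one {n : Type*} [Fintype n]
    [DecidableEq n] {p : ℕ} (hp : p.Prime) {M : Matrix n n ℤ} (hM : ∀ i j, (p : ℤ) ∣ M i j)
    (h : (1 + M) ^ 3 = 1) : M = 0 := by
  have hcube : ∀ i j, 3 * M i j = -(3 * (M ^ 2) i j + (M ^ 3) i j) := by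
    have hexpand : (1 + M) ^ 3 = 1 + ((3 : ℤ) • M + (3 : ℤ) • M ^ 2 + M ^ 3) := by noncomm_ring
    rw [hexpand, add_eq_left] at h
    intro i j
    have := congrFun₂ h i j
    simp only [add_apply, smul_apply, zero_apply, smul_eq_mul] at this
    linarith
  have hdescent : ∀ k, ∀ i j, (p : ℤ) ^ (k + 1) ∣ M i j := by
    intro k
    induction k with
    | zero => simpa using hM
    | succ k ih =>
      exact fun i j ↦ Int.pow_succ_dvd_of_three_mul_eq hp (by omega)
        (pow_dvd_pow_apply_of_dvd ih 2 i j) (pow_dvd_pow_apply_of_dvd ih 3 i j) (hcube i j)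
  ext i j
  exact Int.eq_zero_of_forall_pow_dvd hp.two_le
    fun k ↦ (pow_dvd_pow _ k.le_succ).trans (hdescent k i j)

theorem Matrix.SpecialLinearGroup.map_intCast_eq_one_iff {n : Type*} [Fintype n]
    [DecidableEq n] (N : ℕ) (A : SpecialLinearGroup n ℤ) :
    map (Int.castRingHom (ZMod N)) A = 1 ↔ ∀ i j, (N : ℤ) ∣ ((A : Matrix n n ℤ) - 1) i j := by
  rw [SpecialLinearGroup.ext_iff]
  refine forall₂_congr fun i j ↦ ?_
  rw [sub_apply, ← ZMod.intCast_eq_intCast_iff_dvd_sub, eq_comm]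
  by_cases hij : i = j <;> simp [hij, one_apply]

theorem stmt_13 (A : Matrix.SpecialLinearGroup (Fin 3) ℤ)
    (hA : A ^ 3 = 1) (hA1 : A ≠ 1) (p : ℕ) (hp : p.Prime) :
    Matrix.SpecialLinearGroup.map (Int.castRingHom (ZMod p)) A ≠ 1 := by
  rw [Ne, Matrix.SpecialLinearGroup.map_intCast_eq_one_iff]
  intro hdvd
  have hcube : (1 + ((A : Matrix (Fin 3) (Fin 3) ℤ) - 1)) ^ 3 = 1 := by
    rw [add_sub_cancel, ← Matrix.SpecialLinearGroup.coe_pow, hA, Matrix.SpecialLinearGroup.coe_one]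
  exact hA1 (Subtype.ext (sub_eq_zero.mp
    (Matrix.eq_zero_of_forall_dvd_of_one_add_pow_three_eq_one hp hdvd hcube)))
end

section
/- Let A, B ∈ SL₃(ℤ) with A ≠ B be adjacent vertices of the 334-triangle graph (so A³ = B³ = I, neither equals I, and (AB)⁴ = I). Then for any prime p, their reductions A', B' mod p satisfy A'³ = I, B'³ = I, (A'B')⁴ = I, and A' ≠ B'. -/
/-!
Write `A = 1 + p • M` for an integer matrix with `A ^ 3 = 1` that reduces to the identity mod `p`.
Then `p • M * (A ^ 2 + A + 1) = A ^ 3 - 1 = 0`. For `p ≠ 3` the factor `A ^ 2 + A + 1` reduces to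
the scalar `3 ≠ 0` mod `p`, so its determinant is nonzero and `M = 0`. For `p = 3` one more factor
of `3` splits off, `A ^ 2 + A + 1 = 3 • (3 • M ^ 2 + A)`, and `3 • M ^ 2 + A` reduces to `1`.
So no integer matrix of order 3 reduces to the identity. If the reductions of adjacent `A` and `B` agreed,
`f A` would satisfy `(f A) ^ 3 = (f A) ^ 8 = 1`, hence `f A = 1`, and so `A = 1`.
-/

namespace Matrix

variable {n : Type*} [DecidableEq n]

theorem exists_eq_one_add_smul_of_map_eq_one {p : ℕ} {A : Matrix n n ℤ}
    (h : A.map (Int.castRingHom (ZMod p)) = 1) : ∃ M : Matrix n n ℤ, A = 1 + (p : ℤ) • M := by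
  have hdvd : ∀ i j, (p : ℤ) ∣ (A - 1) i j := fun i j => by
    rw [← ZMod.intCast_zmod_eq_zero_iff_dvd]
    have := congrFun₂ h i j
    by_cases hij : i = j <;> simp_all [one_apply]
  choose M hM using hdvd
  exact ⟨of M, by ext i j; simp [← hM]⟩

variable [Fintype n]

theorem eq_zero_of_mul_eq_zero_of_det_ne_zero {R : Type*} [CommRing R] [IsDomain R]
    {M C : Matrix n n R} (h : M * C = 0) (hC : C.det ≠ 0) : M = 0 := by
  have : C.det • M = 0 := by
    rw [← mul_one M, ← mul_smul_comm, ← mul_adjugate, ← Matrix.mul_assoc, h, Matrix.zero_mul]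
  exact (smul_eq_zero.mp this).resolve_left hC

theorem det_ne_zero_of_map_eq_smul_one {R K : Type*} [CommRing R] [CommRing K] [NoZeroDivisors K]
    (f : R →+* K) {C : Matrix n n R} {c : K} (hc : c ≠ 0) (h : C.map f = c • 1) :
    C.det ≠ 0 := by
  intro h0
  have := RingHom.map_det f C
  rw [h0, map_zero, RingHom.mapMatrix_apply, h, det_smul, det_one, mul_one] at this
  exact pow_ne_zero _ hc this.symm

theorem eq_one_of_pow_three_eq_one_of_map_eq_one {p : ℕ} (hp : p.Prime) {A : Matrix n n ℤ}
    (hA : A ^ 3 = 1) (h : A.map (Int.castRingHom (ZMod p)) = 1) : A = 1 := by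
  have := Fact.mk hp
  let f := (Int.castRingHom (ZMod p)).mapMatrix (m := n)
  have hf_smul_p : ∀ X, f ((p : ℤ) • X) = 0 := fun X => by
    ext i j
    simp only [f, RingHom.mapMatrix_apply, map_apply, smul_apply, smul_eq_mul, zero_apply,
      Int.coe_castRingHom, Int.cast_mul, Int.cast_natCast, ZMod.natCast_self, zero_mul]
  obtain ⟨M, hM⟩ := exists_eq_one_add_smul_of_map_eq_one h
  suffices M = 0 by rw [hM, this, smul_zero, add_zero]
  have hfactor : (p : ℤ) • (M * (A ^ 2 + A + 1)) = 0 := by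
    rw [← smul_mul_assoc, eq_sub_of_add_eq' hM.symm, ← sub_eq_zero.mpr hA]
    noncomm_ring
  rcases eq_or_ne p 3 with rfl | hp3
  · have hsum : A ^ 2 + A + 1 = ((3 : ℕ) : ℤ) • (((3 : ℕ) : ℤ) • M ^ 2 + A) := by
      rw [hM]
      push_cast
      noncomm_ring
    rw [hsum, mul_smul_comm, smul_smul] at hfactor
    refine eq_zero_of_mul_eq_zero_of_det_ne_zero ((smul_eq_zero.mp hfactor).resolve_left
      (by norm_num)) (det_ne_zero_of_map_eq_smul_one (Int.castRingHom _) (one_ne_zero (α := ZMod 3)) ?_)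
    change f _ = _
    rw [map_add, hf_smul_p, show f A = 1 from h, zero_add, one_smul]
  · have h3 : (3 : ZMod p) ≠ 0 := fun h3 => by
      have : p ∣ 3 := (ZMod.natCast_eq_zero_iff 3 p).mp (by exact_mod_cast h3)
      exact hp3 ((Nat.prime_dvd_prime_iff_eq hp Nat.prime_three).mp this)
    refine eq_zero_of_mul_eq_zero_of_det_ne_zero
      ((smul_eq_zero.mp hfactor).resolve_left (by exact_mod_cast hp.ne_zero))
      (det_ne_zero_of_map_eq_smul_one (Int.castRingHom _) h3 ?_)
    change f (A ^ 2 + A + 1) = _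
    rw [map_add, map_add, map_pow, map_one, show f A = 1 from h, one_pow]
    module

theorem SpecialLinearGroup.eq_one_of_pow_three_eq_one_of_map_eq_one {p : ℕ} (hp : p.Prime)
    {A : SpecialLinearGroup n ℤ} (hA : A ^ 3 = 1)
    (h : SpecialLinearGroup.map (Int.castRingHom (ZMod p)) A = 1) : A = 1 :=
  Subtype.ext <| Matrix.eq_one_of_pow_three_eq_one_of_map_eq_one hp
    (by simpa using congrArg Subtype.val hA) (congrArg Subtype.val h)

end Matrix

theorem eq_one_of_pow_three_eq_one_of_mul_self_pow_four_eq_one {M : Type*} [Monoid M] {x : M}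
    (h3 : x ^ 3 = 1) (h4 : (x * x) ^ 4 = 1) : x = 1 :=
  (pow_eq_one_iff_of_coprime (by norm_num : Nat.Coprime 3 8)).mp
    ⟨h3, by rwa [← sq, ← pow_mul] at h4⟩

theorem stmt_16_general (A B : Matrix.SpecialLinearGroup (Fin 3) ℤ)
    (hA : A ^ 3 = 1) (hB : B ^ 3 = 1) (hA1 : A ≠ 1)
    (hadj : (A * B) ^ 4 = 1) (p : ℕ) (hp : p.Prime) :
    let f := Matrix.SpecialLinearGroup.map (n := Fin 3) (Int.castRingHom (ZMod p))
    f A ^ 3 = 1 ∧ f B ^ 3 = 1 ∧ (f A * f B) ^ 4 = 1 ∧ f A ≠ f B := by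
  intro f
  have hfA : f A ^ 3 = 1 := by rw [← map_pow, hA, map_one]
  have hfB : f B ^ 3 = 1 := by rw [← map_pow, hB, map_one]
  have hfAB : (f A * f B) ^ 4 = 1 := by rw [← map_mul, ← map_pow, hadj, map_one]
  refine ⟨hfA, hfB, hfAB, fun hfAfB => hA1 ?_⟩
  rw [← hfAfB] at hfAB
  exact Matrix.SpecialLinearGroup.eq_one_of_pow_three_eq_one_of_map_eq_one hp hA
    (eq_one_of_pow_three_eq_one_of_mul_self_pow_four_eq_one hfA hfAB)

theorem stmt_16 (A B : Matrix.SpecialLinearGroup (Fin 3) ℤ)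
    (hA : A ^ 3 = 1) (hB : B ^ 3 = 1) (hA1 : A ≠ 1) (hB1 : B ≠ 1)
    (hAB : A ≠ B) (hadj : (A * B) ^ 4 = 1) (p : ℕ) (hp : p.Prime) :
    let f := Matrix.SpecialLinearGroup.map (n := Fin 3) (Int.castRingHom (ZMod p))
    f A ^ 3 = 1 ∧ f B ^ 3 = 1 ∧ (f A * f B) ^ 4 = 1 ∧ f A ≠ f B :=
  stmt_16_general A B hA hB hA1 hadj p hp
end
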